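/- arXiv:2002.01044 — 2 statements merged into one kernel-verified Lean document; each statement's English description precedes it below -/
import Mathlib

section
/- Intermediate KL bound for less-probable empirical distributions: for any p ∈ Δ_k with all coordinates positive, any p̂ ∈ Δ_{k,n}, and any S ⊆ Δ_{k,n} such that P_p(q̂) ≤ P_p(p̂) for all q̂ ∈ S, every q̂ ∈ S satisfies KL(q̂, p) ≥ KL(p̂, p) − (k/n)·log(n+1). -/
open Finset
open scoped Classical

noncomputable section

/-- The discrete simplex of empirical count vectors from `n` samples over `k` categories. -/
def discSimplex (k n : ℕ) : Finset (Fin k → ℕ) :=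
  (Fintype.piFinset fun _ : Fin k => Finset.range (n + 1)).filter fun c => ∑ i, c i = n

/-- Multinomial probability of observing the empirical count vector `c` under parameter `p`. -/
def multProb (k : ℕ) (p : Fin k → ℝ) (c : Fin k → ℕ) : ℝ :=
  (Nat.multinomial Finset.univ c : ℝ) * ∏ i, p i ^ c i

/-- The empirical distribution `p̂ = c / n` associated with the count vector `c`. -/
def emp (k n : ℕ) (c : Fin k → ℕ) : Fin k → ℝ := fun i => (c i : ℝ) / n

/-- Kullback–Leibler divergence `KL(q, p) = Σ_i q_i log(q_i / p_i)`
(with the convention `0 · log 0 = 0`, automatic since `0 * x = 0`). -/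
def KLdiv (k : ℕ) (q p : Fin k → ℝ) : ℝ := ∑ i, q i * Real.log (q i / p i)

lemma factA (c d : ℕ) : c.factorial * c ^ d ≤ d.factorial * c ^ c := by
  rcases le_total c d with h | h
  · obtain ⟨m, rfl⟩ := Nat.exists_eq_add_of_le h
    have h1 : c.factorial * c ^ m ≤ (c + m).factorial :=
      le_trans (Nat.mul_le_mul_left _ (Nat.pow_le_pow_left (Nat.le_succ c) m))
        Nat.factorial_mul_pow_le_factorial
    calc c.factorial * c ^ (c + m) = (c.factorial * c ^ m) * c ^ c := by ring
      _ ≤ (c + m).factorial * c ^ c := Nat.mul_le_mul_right _ h1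
  · obtain ⟨m, rfl⟩ := Nat.exists_eq_add_of_le h
    have h1 : ∀ m : ℕ, (d + m).factorial ≤ d.factorial * (d + m) ^ m := by
      intro m
      induction m with
      | zero => simp
      | succ m ih =>
        calc (d + (m+1)).factorial = (d + m + 1) * (d + m).factorial := by
              rw [← Nat.add_assoc]; exact Nat.factorial_succ _
          _ ≤ (d + m + 1) * (d.factorial * (d + m) ^ m) := Nat.mul_le_mul_left _ ih
          _ ≤ (d + m + 1) * (d.factorial * (d + m + 1) ^ m) := by
              exact Nat.mul_le_mul_left _ (Nat.mul_le_mul_left _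
                (Nat.pow_le_pow_left (Nat.le_succ _) m))
          _ = d.factorial * (d + (m+1)) ^ (m+1) := by ring
    calc (d + m).factorial * (d + m) ^ d ≤ d.factorial * (d + m) ^ m * (d + m) ^ d :=
          Nat.mul_le_mul_right _ (h1 m)
      _ = d.factorial * (d + m) ^ (d + m) := by rw [mul_assoc, ← pow_add, Nat.add_comm m d]
lemma maxterm {k n : ℕ} (c d : Fin k → ℕ) (hc : ∑ i, c i = n) (hd : ∑ i, d i = n) :
    Nat.multinomial univ d * ∏ i, (c i) ^ (d i) ≤
      Nat.multinomial univ c * ∏ i, (c i) ^ (c i) := by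
  set A := ∏ i, (c i).factorial with hA
  set B := ∏ i, (d i).factorial with hB
  have hApos : 0 < A := Finset.prod_pos fun i _ => Nat.factorial_pos _
  have hBpos : 0 < B := Finset.prod_pos fun i _ => Nat.factorial_pos _
  have hcs : A * Nat.multinomial univ c = n.factorial := by
    rw [hA]; rw [Nat.multinomial_spec]; rw [hc]
  have hds : B * Nat.multinomial univ d = n.factorial := by
    rw [hB]; rw [Nat.multinomial_spec]; rw [hd]
  have key : ∏ i, ((c i).factorial * (c i) ^ (d i)) ≤ ∏ i, ((d i).factorial * (c i) ^ (c i)) :=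
    Finset.prod_le_prod' fun i _ => factA (c i) (d i)
  have key' : A * ∏ i, (c i) ^ (d i) ≤ B * ∏ i, (c i) ^ (c i) := by
    simpa [Finset.prod_mul_distrib] using key
  refine Nat.le_of_mul_le_mul_left ?_ (Nat.mul_pos hApos hBpos)
  calc A * B * (Nat.multinomial univ d * ∏ i, (c i) ^ (d i))
      = (B * Nat.multinomial univ d) * (A * ∏ i, (c i) ^ (d i)) := by ring
    _ ≤ (A * Nat.multinomial univ c) * (B * ∏ i, (c i) ^ (c i)) := by
        rw [hds, hcs]; exact Nat.mul_le_mul_left _ key'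
    _ = A * B * (Nat.multinomial univ c * ∏ i, (c i) ^ (c i)) := by ring

lemma simplex_eq (k n : ℕ) : discSimplex k n = piAntidiag (univ : Finset (Fin k)) n := by
  ext d
  simp only [discSimplex, mem_filter, Fintype.mem_piFinset, mem_range, mem_piAntidiag]
  constructor
  · rintro ⟨-, h⟩; exact ⟨h, fun i _ => mem_univ i⟩
  · rintro ⟨h, -⟩
    refine ⟨fun i => ?_, h⟩
    have h2 := Finset.single_le_sum (f := d) (fun i _ => Nat.zero_le _) (mem_univ i)
    rw [h] at h2
    omega

lemma simplex_card (k n : ℕ) : (discSimplex k n).card ≤ (n + 1) ^ k := by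
  calc (discSimplex k n).card
      ≤ (Fintype.piFinset fun _ : Fin k => Finset.range (n + 1)).card :=
        Finset.card_filter_le _ _
    _ = (n + 1) ^ k := by simp [Fintype.card_piFinset]
/-- The "type weight" `T c = M(c) ∏ cᵢ^cᵢ` as a real number. -/
def Tw (k : ℕ) (c : Fin k → ℕ) : ℝ :=
  (Nat.multinomial univ c : ℝ) * ∏ i, ((c i : ℝ)) ^ (c i)

lemma expand_pow {k n : ℕ} (c : Fin k → ℕ) (hc : ∑ i, c i = n) :
    ((n : ℝ)) ^ n = ∑ d ∈ discSimplex k n,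
      (Nat.multinomial univ d : ℝ) * ∏ i, ((c i : ℝ)) ^ (d i) := by
  have h1 : (∑ i, ((c i : ℝ))) = (n : ℝ) := by
    rw [← Nat.cast_sum, hc]
  rw [simplex_eq, ← h1, Finset.sum_pow_eq_sum_piAntidiag]

lemma Tw_le {k n : ℕ} (c : Fin k → ℕ) (hc : c ∈ discSimplex k n) :
    Tw k c ≤ ((n : ℝ)) ^ n := by
  have hcs : ∑ i, c i = n := (Finset.mem_filter.mp hc).2
  rw [expand_pow c hcs]
  exact Finset.single_le_sum
    (f := fun d => (Nat.multinomial univ d : ℝ) * ∏ i, ((c i : ℝ)) ^ (d i))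
    (fun d _ => by positivity) hc

lemma le_Tw {k n : ℕ} (c : Fin k → ℕ) (hc : c ∈ discSimplex k n) :
    ((n : ℝ)) ^ n ≤ ((n : ℝ) + 1) ^ k * Tw k c := by
  have hcs : ∑ i, c i = n := (Finset.mem_filter.mp hc).2
  rw [expand_pow c hcs]
  have hb : ∀ d ∈ discSimplex k n,
      (Nat.multinomial univ d : ℝ) * ∏ i, ((c i : ℝ)) ^ (d i) ≤ Tw k c := by
    intro d hd
    have hds : ∑ i, d i = n := (Finset.mem_filter.mp hd).2
    have := maxterm c d hcs hds
    have h2 : ((Nat.multinomial univ d * ∏ i, (c i) ^ (d i) : ℕ) : ℝ)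
        ≤ ((Nat.multinomial univ c * ∏ i, (c i) ^ (c i) : ℕ) : ℝ) := Nat.cast_le.mpr this
    unfold Tw
    push_cast at h2 ⊢
    exact h2
  calc (∑ d ∈ discSimplex k n, (Nat.multinomial univ d : ℝ) * ∏ i, ((c i : ℝ)) ^ (d i))
      ≤ (discSimplex k n).card • Tw k c := Finset.sum_le_card_nsmul _ _ _ hb
    _ = ((discSimplex k n).card : ℝ) * Tw k c := by rw [nsmul_eq_mul]
    _ ≤ ((n : ℝ) + 1) ^ k * Tw k c := by
        have hT : 0 ≤ Tw k c := by unfold Tw; positivity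
        have hcard : ((discSimplex k n).card : ℝ) ≤ ((n : ℝ) + 1) ^ k := by
          have := simplex_card k n
          calc ((discSimplex k n).card : ℝ) ≤ (((n + 1) ^ k : ℕ) : ℝ) := Nat.cast_le.mpr this
            _ = ((n : ℝ) + 1) ^ k := by push_cast; ring
        exact mul_le_mul_of_nonneg_right hcard hT

lemma multProb_eq {k n : ℕ} (hn : 1 ≤ n) (p : Fin k → ℝ) (hp0 : ∀ i, 0 < p i)
    (d : Fin k → ℕ) (hds : ∑ i, d i = n) :
    multProb k p d = Tw k d / ((n : ℝ)) ^ n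
      * Real.exp (-(n : ℝ) * KLdiv k (emp k n d) p) := by
  have hn0 : (0 : ℝ) < n := by exact_mod_cast hn
  have hper : ∀ i, p i ^ (d i) =
      (((d i : ℝ)) / n) ^ (d i)
        * Real.exp (-((d i : ℝ)) * Real.log ((((d i : ℝ)) / n) / p i)) := by
    intro i
    rcases Nat.eq_zero_or_pos (d i) with h0 | hpos
    · simp [h0]
    · set x : ℝ := ((d i : ℝ)) / n with hx
      have hxpos : 0 < x := by
        apply div_pos _ hn0; exact_mod_cast hpos
      set y : ℝ := x / p i with hy
      have hypos : 0 < y := div_pos hxpos (hp0 i)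
      have hexp : Real.exp (-((d i : ℝ)) * Real.log y) = (y ^ (d i))⁻¹ := by
        rw [neg_mul, Real.exp_neg, Real.exp_nat_mul, Real.exp_log hypos]
      rw [hexp, hy, div_pow]
      have hx0 : x ^ (d i) ≠ 0 := by positivity
      have hnx : ((n : ℝ)) ^ (d i) * x ^ (d i) = ((d i : ℝ)) ^ (d i) := by
        rw [← mul_pow, hx, mul_div_cancel₀ _ (ne_of_gt hn0)]
      field_simp
      rw [div_pow, ← hnx]; field_simp
  have hsum : (∑ i, -((d i : ℝ)) * Real.log ((((d i : ℝ)) / n) / p i))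
      = -(n : ℝ) * KLdiv k (emp k n d) p := by
    unfold KLdiv emp
    rw [neg_mul, Finset.mul_sum, ← Finset.sum_neg_distrib]
    apply Finset.sum_congr rfl
    intro i _
    have hne : (n : ℝ) ≠ 0 := ne_of_gt hn0
    field_simp
  have hprod : (∏ i, ((((d i : ℝ)) / n) ^ (d i)))
      = (∏ i, ((d i : ℝ)) ^ (d i)) / ((n : ℝ)) ^ n := by
    simp_rw [div_pow]
    rw [Finset.prod_div_distrib, Finset.prod_pow_eq_pow_sum, hds]
  calc multProb k p d
      = (Nat.multinomial univ d : ℝ) * ∏ i, p i ^ (d i) := rfl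
    _ = (Nat.multinomial univ d : ℝ) * ∏ i, ((((d i : ℝ)) / n) ^ (d i)
          * Real.exp (-((d i : ℝ)) * Real.log ((((d i : ℝ)) / n) / p i))) := by
        congr 1; exact Finset.prod_congr rfl fun i _ => hper i
    _ = (Nat.multinomial univ d : ℝ) * ((∏ i, ((((d i : ℝ)) / n) ^ (d i)))
          * Real.exp (∑ i, -((d i : ℝ)) * Real.log ((((d i : ℝ)) / n) / p i))) := by
        rw [Finset.prod_mul_distrib, Real.exp_sum]
    _ = Tw k d / ((n : ℝ)) ^ n * Real.exp (-(n : ℝ) * KLdiv k (emp k n d) p) := by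
        rw [hprod, hsum]; unfold Tw; ring

/-- Intermediate KL bound: if every `q̂ ∈ S ⊆ Δ_{k,n}` satisfies `P_p(q̂) ≤ P_p(p̂)`, then every
`q̂ ∈ S` satisfies `KL(q̂, p) ≥ KL(p̂, p) - (k/n)·log(n+1)`. -/

theorem kl_bound_less_probable (k n : ℕ) (hk : 2 ≤ k) (hn : 1 ≤ n)
    (p : Fin k → ℝ) (hp0 : ∀ i, 0 < p i) (hp1 : ∑ i, p i = 1)
    (c : Fin k → ℕ) (hc : c ∈ discSimplex k n)
    (S : Finset (Fin k → ℕ)) (hS : S ⊆ discSimplex k n)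
    (hle : ∀ d ∈ S, multProb k p d ≤ multProb k p c) :
    ∀ d ∈ S,
      KLdiv k (emp k n c) p - ((k : ℝ) / n) * Real.log ((n : ℝ) + 1)
        ≤ KLdiv k (emp k n d) p := by
  intro d hd
  have hdS : d ∈ discSimplex k n := hS hd
  have hcs : ∑ i, c i = n := (Finset.mem_filter.mp hc).2
  have hds : ∑ i, d i = n := (Finset.mem_filter.mp hdS).2
  have hn0 : (0 : ℝ) < n := by exact_mod_cast hn
  set KLc := KLdiv k (emp k n c) p with hKLc
  set KLd := KLdiv k (emp k n d) p with hKLd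
  set N : ℝ := ((n : ℝ)) ^ n with hN
  set K : ℝ := ((n : ℝ) + 1) ^ k with hK
  set Ec : ℝ := Real.exp (-(n : ℝ) * KLc) with hEc
  set Ed : ℝ := Real.exp (-(n : ℝ) * KLd) with hEd
  have hNpos : 0 < N := by positivity
  have hKpos : 0 < K := by positivity
  have hEcpos : 0 < Ec := Real.exp_pos _
  have hEdpos : 0 < Ed := Real.exp_pos _
  have hidc : multProb k p c = Tw k c / N * Ec := multProb_eq hn p hp0 c hcs
  have hidd : multProb k p d = Tw k d / N * Ed := multProb_eq hn p hp0 d hds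
  have h1 : Tw k c ≤ N := Tw_le c hc
  have h2 : N ≤ K * Tw k d := le_Tw d hdS
  have h3 : Tw k d / N * Ed ≤ Tw k c / N * Ec := by
    rw [← hidd, ← hidc]; exact hle d hd
  have h4 : Tw k d * Ed ≤ Tw k c * Ec := by
    have := mul_le_mul_of_nonneg_right h3 (le_of_lt hNpos)
    calc Tw k d * Ed = Tw k d / N * Ed * N := by field_simp
      _ ≤ Tw k c / N * Ec * N := this
      _ = Tw k c * Ec := by field_simp
  have h5 : N * Ed ≤ K * (N * Ec) := by
    calc N * Ed ≤ K * Tw k d * Ed := by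
          exact mul_le_mul_of_nonneg_right h2 (le_of_lt hEdpos)
      _ = K * (Tw k d * Ed) := by ring
      _ ≤ K * (Tw k c * Ec) := by
          exact mul_le_mul_of_nonneg_left h4 (le_of_lt hKpos)
      _ ≤ K * (N * Ec) := by
          have := mul_le_mul_of_nonneg_right h1 (le_of_lt hEcpos)
          exact mul_le_mul_of_nonneg_left this (le_of_lt hKpos)
  have h6 : Ed ≤ K * Ec := by
    have := (mul_le_mul_iff_right₀ hNpos).mp (by linarith : N * Ed ≤ N * (K * Ec))
    exact this
  set L : ℝ := Real.log ((n : ℝ) + 1) with hL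
  have hKexp : K = Real.exp ((k : ℝ) * L) := by
    rw [hK, hL]
    rw [Real.exp_nat_mul, Real.exp_log (by positivity)]
  have h7 : Ed ≤ Real.exp ((k : ℝ) * L + -(n : ℝ) * KLc) := by
    rw [Real.exp_add, ← hKexp, ← hEc]; exact h6
  have h8 : -(n : ℝ) * KLd ≤ (k : ℝ) * L + -(n : ℝ) * KLc := Real.exp_le_exp.mp h7
  rw [← mul_le_mul_iff_right₀ hn0]
  have heq : (n : ℝ) * (KLc - ((k : ℝ) / n) * L) = (n : ℝ) * KLc - (k : ℝ) * L := by
    field_simp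
  rw [heq]
  linarith
end
end

section
/- Sanov-based confidence region: for any p ∈ Δ_k with all coordinates positive and any 0 < δ < 1, if p̂ denotes the empirical distribution of n i.i.d. samples from a categorical distribution with parameter p, then P_p( KL(p̂, p) ≤ log((n+1)^k / δ)/n ) ≥ 1 − δ. -/
open Finset
open scoped Classical

noncomputable section

lemma discSimplex_eq (k n : ℕ) : discSimplex k n = Finset.piAntidiag Finset.univ n := by
  ext c
  simp only [discSimplex, mem_filter, Fintype.mem_piFinset, mem_range, mem_piAntidiag,
    mem_univ, implies_true, and_true, ne_eq]
  constructor
  · rintro ⟨-, h⟩; exact h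
  · intro h
    refine ⟨fun i => ?_, h⟩
    have : c i ≤ n := h ▸ Finset.single_le_sum (fun i _ => Nat.zero_le _) (mem_univ i)
    omega

lemma sum_multProb (k n : ℕ) (q : Fin k → ℝ) :
    ∑ c ∈ discSimplex k n, multProb k q c = (∑ i, q i) ^ n := by
  rw [discSimplex_eq, Finset.sum_pow_eq_sum_piAntidiag]
  rfl

lemma card_discSimplex (k n : ℕ) : ((discSimplex k n).card : ℝ) ≤ ((n : ℝ) + 1) ^ k := by
  have h1 : (discSimplex k n).card ≤ (n + 1) ^ k := by
    calc (discSimplex k n).card ≤ (Fintype.piFinset fun _ : Fin k => Finset.range (n + 1)).card :=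
          Finset.card_le_card (Finset.filter_subset _ _)
    _ = (n + 1) ^ k := by simp [Fintype.card_piFinset]
  calc ((discSimplex k n).card : ℝ) ≤ (((n + 1) ^ k : ℕ) : ℝ) := by exact_mod_cast h1
  _ = ((n : ℝ) + 1) ^ k := by push_cast; ring

lemma multProb_nonneg (k : ℕ) {q : Fin k → ℝ} (hq : ∀ i, 0 ≤ q i) (c : Fin k → ℕ) :
    0 ≤ multProb k q c :=
  mul_nonneg (Nat.cast_nonneg _) (Finset.prod_nonneg fun i _ => pow_nonneg (hq i) _)

lemma multProb_le_exp (k n : ℕ) (hn : 1 ≤ n) (p : Fin k → ℝ) (hp0 : ∀ i, 0 < p i)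
    {c : Fin k → ℕ} (hc : c ∈ discSimplex k n) :
    multProb k p c ≤ Real.exp (-(n : ℝ) * KLdiv k (emp k n c) p) := by
  have hnR : (0 : ℝ) < n := by exact_mod_cast hn
  have hcsum : ∑ i, c i = n := (Finset.mem_filter.mp hc).2
  have hemp_nonneg : ∀ i, 0 ≤ emp k n c i := fun i => div_nonneg (Nat.cast_nonneg _) hnR.le
  have hemp_sum : ∑ i, emp k n c i = 1 := by
    simp only [emp, ← Finset.sum_div]
    rw [div_eq_one_iff_eq hnR.ne']
    exact_mod_cast hcsum
  -- step 1 : multinomial * ∏ emp^c ≤ 1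
  have h1 : (Nat.multinomial Finset.univ c : ℝ) * ∏ i, emp k n c i ^ c i ≤ 1 := by
    have htot := sum_multProb k n (emp k n c)
    rw [hemp_sum, one_pow] at htot
    calc (Nat.multinomial Finset.univ c : ℝ) * ∏ i, emp k n c i ^ c i
        = multProb k (emp k n c) c := rfl
      _ ≤ ∑ c' ∈ discSimplex k n, multProb k (emp k n c) c' :=
          Finset.single_le_sum (fun c' _ => multProb_nonneg k hemp_nonneg c') hc
      _ = 1 := htot
  -- step 2 : factor the product
  have hprod : ∏ i, p i ^ c i
      = (∏ i, emp k n c i ^ c i) * ∏ i, Real.exp ((c i : ℝ) * Real.log (p i / emp k n c i)) := by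
    rw [← Finset.prod_mul_distrib]
    refine Finset.prod_congr rfl fun i _ => ?_
    rcases Nat.eq_zero_or_pos (c i) with h | h
    · simp [h]
    · have hei : 0 < emp k n c i := div_pos (by exact_mod_cast h) hnR
      have hratio : 0 < p i / emp k n c i := div_pos (hp0 i) hei
      rw [Real.exp_nat_mul, Real.exp_log hratio, ← mul_pow,
        mul_div_cancel₀ _ hei.ne']
  -- step 3 : exp(-n KL) = ∏ exp(...)
  have hKL : Real.exp (-(n : ℝ) * KLdiv k (emp k n c) p)
      = ∏ i, Real.exp ((c i : ℝ) * Real.log (p i / emp k n c i)) := by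
    rw [← Real.exp_sum]
    congr 1
    rw [KLdiv, Finset.mul_sum]
    refine Finset.sum_congr rfl fun i _ => ?_
    rcases Nat.eq_zero_or_pos (c i) with h | h
    · simp [emp, h]
    · have hci : (0 : ℝ) < c i := by exact_mod_cast h
      have hei : 0 < emp k n c i := div_pos hci hnR
      have hne : (n : ℝ) * emp k n c i = c i := by
        simp only [emp]; field_simp
      rw [Real.log_div (hp0 i).ne' hei.ne', Real.log_div hei.ne' (hp0 i).ne']
      linear_combination (Real.log (p i) - Real.log (emp k n c i)) * hne
  rw [multProb, hprod, hKL, ← mul_assoc]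
  have hEnn : 0 ≤ ∏ i, Real.exp ((c i : ℝ) * Real.log (p i / emp k n c i)) :=
    Finset.prod_nonneg fun i _ => (Real.exp_pos _).le
  nlinarith [h1, hEnn, mul_nonneg (Nat.cast_nonneg (α := ℝ) (Nat.multinomial Finset.univ c))
    (Finset.prod_nonneg fun (i : Fin k) (_ : i ∈ Finset.univ) => pow_nonneg (hemp_nonneg i) (c i))]


/-- Sanov-based confidence region: for `p ∈ Δ_k` with all coordinates positive and `0 < δ < 1`,
`P_p( KL(p̂, p) ≤ log((n+1)^k / δ) / n ) ≥ 1 - δ`, where `p̂` is the empirical distribution of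
`n` i.i.d. categorical samples from `p`. -/
theorem sanov_confidence_region (k n : ℕ) (hk : 2 ≤ k) (hn : 1 ≤ n)
    (p : Fin k → ℝ) (hp0 : ∀ i, 0 < p i) (hp1 : ∑ i, p i = 1)
    (δ : ℝ) (hδ0 : 0 < δ) (hδ1 : δ < 1) :
    1 - δ ≤ ∑ c ∈ (discSimplex k n).filter
        (fun c => KLdiv k (emp k n c) p ≤ Real.log (((n : ℝ) + 1) ^ k / δ) / n),
        multProb k p c := by
  have hnR : (0 : ℝ) < n := by exact_mod_cast hn
  set ε : ℝ := Real.log (((n : ℝ) + 1) ^ k / δ) / n with hε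
  have hX : (0 : ℝ) < ((n : ℝ) + 1) ^ k / δ := div_pos (pow_pos (by linarith) k) hδ0
  have hsum1 : ∑ c ∈ discSimplex k n, multProb k p c = 1 := by
    rw [sum_multProb, hp1, one_pow]
  have hsplit := Finset.sum_filter_add_sum_filter_not (discSimplex k n)
    (fun c => KLdiv k (emp k n c) p ≤ ε) (multProb k p)
  -- bound the bad part
  have hexp : Real.exp (-(n : ℝ) * ε) = δ / ((n : ℝ) + 1) ^ k := by
    rw [hε, neg_mul, mul_div_cancel₀ _ hnR.ne', Real.exp_neg, Real.exp_log hX,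
      inv_div]
  have hbad : ∑ c ∈ (discSimplex k n).filter (fun c => ¬ KLdiv k (emp k n c) p ≤ ε),
      multProb k p c ≤ δ := by
    have hstep : ∀ c ∈ (discSimplex k n).filter (fun c => ¬ KLdiv k (emp k n c) p ≤ ε),
        multProb k p c ≤ δ / ((n : ℝ) + 1) ^ k := by
      intro c hc
      obtain ⟨hcm, hckl⟩ := Finset.mem_filter.mp hc
      have h1 := multProb_le_exp k n hn p hp0 hcm
      have h2 : Real.exp (-(n : ℝ) * KLdiv k (emp k n c) p) ≤ Real.exp (-(n : ℝ) * ε) := by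
        apply Real.exp_le_exp.mpr
        have := le_of_not_ge hckl
        nlinarith
      rw [hexp] at h2
      linarith
    calc ∑ c ∈ (discSimplex k n).filter (fun c => ¬ KLdiv k (emp k n c) p ≤ ε), multProb k p c
        ≤ ∑ _c ∈ (discSimplex k n).filter (fun c => ¬ KLdiv k (emp k n c) p ≤ ε),
            δ / ((n : ℝ) + 1) ^ k := Finset.sum_le_sum hstep
      _ = ((discSimplex k n).filter (fun c => ¬ KLdiv k (emp k n c) p ≤ ε)).card
            * (δ / ((n : ℝ) + 1) ^ k) := by rw [Finset.sum_const, nsmul_eq_mul]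
      _ ≤ ((n : ℝ) + 1) ^ k * (δ / ((n : ℝ) + 1) ^ k) := by
          apply mul_le_mul_of_nonneg_right _ (le_of_lt (div_pos hδ0 (pow_pos (by linarith) k)))
          calc (((discSimplex k n).filter _).card : ℝ)
              ≤ ((discSimplex k n).card : ℝ) := by
                exact_mod_cast Finset.card_le_card (Finset.filter_subset _ _)
            _ ≤ ((n : ℝ) + 1) ^ k := card_discSimplex k n
      _ = δ := mul_div_cancel₀ _ (pow_pos (show (0:ℝ) < (n:ℝ)+1 by linarith) k).ne'
  linarith [hsplit, hsum1.symm ▸ hsplit]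
end
end
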